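/- Let k ≥ 1 and n ≥ 2k+1, and let Σ_k be the set of k-sparse vectors of ℝⁿ. Then the ℓ¹-norm is the unique maximizer of A_Σ^{RIP,suff}(R) := (D_Σ(R) + 1)^{−1/2} over the class of weighted ℓ¹-norms: D_Σ(‖·‖₁) = 1, and for every weight vector w ∈ ℝⁿ with w_i > 0 for all i, max_i w_i = 1 and w ≠ (1,…,1), one has D_Σ(‖·‖_w) > 1, i.e. A_Σ^{RIP,suff}(‖·‖_w) < A_Σ^{RIP,suff}(‖·‖₁). -/

import Mathlib

open scoped BigOperators ENNReal RealInnerProductSpace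
open MeasureTheory Metric

noncomputable section

/-- The set of `k`-sparse vectors of `ℝⁿ`. -/
def sparseVecs (n k : ℕ) : Set (EuclideanSpace ℝ (Fin n)) :=
  {x | ∃ s : Finset (Fin n), s.card ≤ k ∧ ∀ i ∉ s, x i = 0}

/-- Descent set (collection of descent vectors) of `R` at `x`. -/
def descentCone {n : ℕ} (R : EuclideanSpace ℝ (Fin n) → ℝ) (x : EuclideanSpace ℝ (Fin n)) :
    Set (EuclideanSpace ℝ (Fin n)) := {z | R (x + z) ≤ R x}

/-- Descent vectors of `R` at the model set `S`. -/
def descentConeSet {n : ℕ} (R : EuclideanSpace ℝ (Fin n) → ℝ)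
    (S : Set (EuclideanSpace ℝ (Fin n))) : Set (EuclideanSpace ℝ (Fin n)) :=
  ⋃ x ∈ S, descentCone R x

/-- Weighted ℓ¹-norm `‖z‖_w = ∑ i, w i * |z i|`. -/
def wNorm {n : ℕ} (w : Fin n → ℝ) (z : EuclideanSpace ℝ (Fin n)) : ℝ := ∑ i, w i * |z i|

/-- Restriction of a vector to a set of coordinates (`z_S`). -/
def coordRestrict {n : ℕ} (z : EuclideanSpace ℝ (Fin n)) (S : Finset (Fin n)) :
    EuclideanSpace ℝ (Fin n) := WithLp.toLp 2 (fun i => if i ∈ S then z i else 0)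

/-- Atomic norm `‖·‖_Σ` generated by the `k`-sparse unit vectors. -/
def atomNormSigma (n k : ℕ) (z : EuclideanSpace ℝ (Fin n)) : ℝ :=
  gauge (convexHull ℝ {u : EuclideanSpace ℝ (Fin n) | u ∈ sparseVecs n k ∧ ‖u‖ = 1}) z

/-- `D_Σ(R)`, where `T` selects for each `z` a set of `k` indices carrying the `k` largest
absolute values of coordinates of `z`. -/
def Dsigma (n k : ℕ) (T : EuclideanSpace ℝ (Fin n) → Finset (Fin n))
    (R : EuclideanSpace ℝ (Fin n) → ℝ) : ℝ :=
  sSup {r : ℝ | ∃ z ∈ descentConeSet R (sparseVecs n k) \ {0},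
    r = (atomNormSigma n k (coordRestrict z (T z)ᶜ)) ^ 2 / ‖coordRestrict z (T z)‖ ^ 2}

/-!
For the ℓ¹-norm, a descent vector `z` at a `k`-sparse point satisfies `‖z_{Tᶜ}‖₁ ≤ ‖z_T‖₁`, and
every entry of `z_{Tᶜ}` is at most `‖z_T‖₂ / √k`. So `z_{Tᶜ}` lies in `‖z_T‖₂ / √k` times the
polytope `{v | ‖v‖_∞ ≤ 1, ‖v‖₁ ≤ k}`, whose extreme points are `k`-sparse with entries in
`{0, ±1}`, hence of Euclidean norm at most `√k`; therefore `‖z_{Tᶜ}‖_Σ ≤ ‖z_T‖₂` and `D_Σ ≤ 1`.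
The same argument bounds `D_Σ(‖·‖_w)` by `(min w)⁻²`.

Lower bounds come from the step vectors `z = 1_A + β 1_B` with `A`, `B` disjoint, `|A| = k`,
`|B| = k + 1` and `β < 1`: pairing with `1_B / √k` gives `‖z_{Aᶜ}‖_Σ ≥ (k + 1) β / √k`, so the
ratio is at least `((k + 1) β / k)²`. For the ℓ¹-norm, `β = k / (k + 1)` gives a descent vector,
so `D_Σ = 1`. For a non-constant weight, let `A` consist of `k` heaviest coordinates other than a
lightest one `j₀` (so `A` contains a coordinate of weight `1`) and `B` of `j₀` and `k` further
coordinates; then `z` is a descent vector for some `β > k / (k + 1)`, and `D_Σ(‖·‖_w) > 1`.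
-/

open Finset Topology

section GaugeAndExtremePoints

variable {E : Type*} [AddCommGroup E] [Module ℝ E]

theorem le_gauge_of_forall_le_one {s : Set E} (hs : Absorbent ℝ s) (f : E →ₗ[ℝ] ℝ)
    (hf : ∀ a ∈ s, f a ≤ 1) (x : E) : f x ≤ gauge s x := by
  by_contra! h
  obtain ⟨b, hb, hbx, a, ha, rfl⟩ := exists_lt_of_gauge_lt hs h
  rw [map_smul, smul_eq_mul] at hbx
  nlinarith [hf a ha]

theorem eq_zero_of_mem_extremePoints_of_add_mem_of_sub_mem {A : Set E} {x d : E}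
    (hx : x ∈ A.extremePoints ℝ) (hadd : x + d ∈ A) (hsub : x - d ∈ A) : d = 0 := by
  have hmid : x ∈ openSegment ℝ (x + d) (x - d) :=
    ⟨1 / 2, 1 / 2, by norm_num, by norm_num, by norm_num, by module⟩
  simpa using hx.2 hadd hsub hmid

end GaugeAndExtremePoints

theorem abs_add_eq_of_abs_le {a d : ℝ} (h : |d| ≤ |a|) : |a + d| = |a| + Real.sign a * d := by
  rcases lt_trichotomy a 0 with ha | rfl | ha
  · rw [abs_of_neg ha] at h ⊢
    rw [Real.sign_of_neg ha, abs_of_nonpos (by linarith [le_abs_self d])]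
    ring
  · simp only [abs_zero, abs_nonpos_iff] at h
    simp [h]
  · rw [abs_of_pos ha] at h ⊢
    rw [Real.sign_of_pos ha, abs_of_nonneg (by linarith [neg_abs_le d])]
    ring

theorem Real.abs_sign_of_ne_zero {a : ℝ} (ha : a ≠ 0) : |Real.sign a| = 1 := by
  rcases Real.sign_apply_eq_of_ne_zero a ha with h | h <;> rw [h] <;> norm_num

theorem Real.sign_mul_self_of_ne_zero {a : ℝ} (ha : a ≠ 0) : Real.sign a * Real.sign a = 1 := by
  rcases Real.sign_apply_eq_of_ne_zero a ha with h | h <;> rw [h] <;> norm_num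

theorem Finset.sum_abs_le_sqrt_card_mul_sqrt_sum_sq {ι : Type*} (s : Finset ι) (f : ι → ℝ) :
    ∑ i ∈ s, |f i| ≤ √(#s : ℝ) * √(∑ i ∈ s, f i ^ 2) := by
  rw [← Real.sqrt_mul (Nat.cast_nonneg _)]
  apply Real.le_sqrt_of_sq_le
  simpa using sq_sum_le_card_mul_sum_sq (s := s) (f := fun i => |f i|)

theorem Finset.sum_le_sum_of_card_le_of_forall_le {ι : Type*} [DecidableEq ι] {f : ι → ℝ}
    (hf : ∀ i, 0 ≤ f i) {S T : Finset ι} (hcard : #S ≤ #T)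
    (hdom : ∀ i ∈ T, ∀ j ∉ T, f j ≤ f i) : ∑ i ∈ S, f i ≤ ∑ i ∈ T, f i := by
  rw [← sum_inter_add_sum_sdiff S T, ← sum_inter_add_sum_sdiff T S, inter_comm]
  refine add_le_add le_rfl ?_
  rcases (S \ T).eq_empty_or_nonempty with h | h
  · simpa [h] using sum_nonneg fun i _ => hf i
  obtain ⟨j, hj, hjmax⟩ := (S \ T).exists_max_image f h
  have hcard' : #(S \ T) ≤ #(T \ S) := by
    have := card_sdiff_add_card_inter S T
    have := card_sdiff_add_card_inter T S
    rw [inter_comm] at this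
    omega
  calc ∑ i ∈ S \ T, f i ≤ #(S \ T) • f j := sum_le_card_nsmul _ _ _ hjmax
    _ ≤ #(T \ S) • f j := nsmul_le_nsmul_left (hf j) hcard'
    _ ≤ ∑ i ∈ T \ S, f i := card_nsmul_le_sum _ _ _ fun i hi =>
        hdom i (mem_sdiff.mp hi).1 j (mem_sdiff.mp hj).2

theorem Finset.eq_of_card_eq_of_forall_le_of_forall_lt {ι : Type*} {f : ι → ℝ} {S A : Finset ι}
    (hcard : #S = #A) (hS : ∀ i ∈ S, ∀ j ∉ S, f j ≤ f i) (hA : ∀ i ∈ A, ∀ j ∉ A, f j < f i) :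
    S = A := by
  classical
  have hAS : A ⊆ S := by
    intro i hi
    by_contra hiS
    obtain ⟨l, hlS, hlA⟩ : ∃ l ∈ S, l ∉ A := by
      by_contra! h
      exact hiS ((eq_of_subset_of_card_le h hcard.ge) ▸ hi)
    exact (hA i hi l hlA).not_ge (hS l hlS i hiS)
  exact (eq_of_subset_of_card_le hAS hcard.le).symm

theorem Finset.exists_subset_card_eq_forall_le {ι α : Type*} [DecidableEq ι] [LinearOrder α]
    (f : ι → α) (s : Finset ι) {m : ℕ} (hm : m ≤ #s) :
    ∃ t ⊆ s, #t = m ∧ ∀ i ∈ t, ∀ j ∈ s \ t, f j ≤ f i := by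
  induction m with
  | zero => exact ⟨∅, empty_subset s, card_empty, by simp⟩
  | succ m ih =>
    obtain ⟨t, hts, htm, hdom⟩ := ih (by omega)
    obtain ⟨a, ha, hamax⟩ := (s \ t).exists_max_image f
      (by rw [← card_pos, card_sdiff_of_subset hts]; omega)
    have hat := (mem_sdiff.mp ha).2
    refine ⟨insert a t, insert_subset (mem_sdiff.mp ha).1 hts,
      by rw [card_insert_of_notMem hat, htm], fun i hi j hj => ?_⟩
    have hj' : j ∈ s \ t :=
      mem_sdiff.mpr ⟨(mem_sdiff.mp hj).1, fun h => (mem_sdiff.mp hj).2 (mem_insert_of_mem h)⟩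
    rcases mem_insert.mp hi with rfl | hit
    · exact hamax j hj'
    · exact hdom i hit j hj'

section Polytope

variable {ι : Type*} [Fintype ι]

def cubeL1Polytope (ι : Type*) [Fintype ι] (k : ℕ) : Set (EuclideanSpace ℝ ι) :=
  {v | (∀ i, |v i| ≤ 1) ∧ ∑ i, |v i| ≤ k}

variable {k : ℕ}

theorem norm_sq_le_sum_abs {v : EuclideanSpace ℝ ι} (hv : ∀ i, |v i| ≤ 1) :
    ‖v‖ ^ 2 ≤ ∑ i, |v i| := by
  rw [EuclideanSpace.real_norm_sq_eq]
  gcongr with i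
  rw [← sq_abs, sq]
  exact mul_le_of_le_one_left (abs_nonneg _) (hv i)

theorem convex_cubeL1Polytope : Convex ℝ (cubeL1Polytope ι k) := by
  intro x hx y hy a b ha hb hab
  have hcoord : ∀ i, |(a • x + b • y) i| ≤ a * |x i| + b * |y i| := fun i => by
    simpa [abs_mul, abs_of_nonneg ha, abs_of_nonneg hb] using abs_add_le (a * x i) (b * y i)
  refine ⟨fun i => ?_, ?_⟩
  · nlinarith [hcoord i, hx.1 i, hy.1 i]
  · calc ∑ i, |(a • x + b • y) i| ≤ ∑ i, (a * |x i| + b * |y i|) := sum_le_sum fun i _ => hcoord i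
      _ = a * ∑ i, |x i| + b * ∑ i, |y i| := by rw [sum_add_distrib, mul_sum, mul_sum]
      _ ≤ a * k + b * k := by gcongr; exacts [hx.2, hy.2]
      _ = k := by rw [← add_mul, hab, one_mul]

theorem isCompact_cubeL1Polytope : IsCompact (cubeL1Polytope ι k) := by
  have hcont : ∀ i, Continuous fun v : EuclideanSpace ℝ ι => |v i| := fun i => by fun_prop
  have hclosed : IsClosed (cubeL1Polytope ι k) := by
    have : cubeL1Polytope ι k = (⋂ i, {v | |v i| ≤ 1}) ∩ {v | ∑ i, |v i| ≤ (k : ℝ)} := by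
      ext; simp [cubeL1Polytope]
    rw [this]
    exact (isClosed_iInter fun i => isClosed_le (hcont i) continuous_const).inter
      (isClosed_le (continuous_finsetSum _ fun i _ => hcont i) continuous_const)
  refine (isCompact_closedBall (0 : EuclideanSpace ℝ ι) √k).of_isClosed_subset hclosed
    fun v hv => ?_
  rw [mem_closedBall_zero_iff]
  exact Real.le_sqrt_of_sq_le ((norm_sq_le_sum_abs hv.1).trans hv.2)

theorem add_mem_cubeL1Polytope {x d : EuclideanSpace ℝ ι}
    (hd : ∀ i, |d i| ≤ |x i| ∧ |x i| + |d i| ≤ 1)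
    (hsum : ∑ i, Real.sign (x i) * d i ≤ k - ∑ i, |x i|) : x + d ∈ cubeL1Polytope ι k := by
  refine ⟨fun i => (abs_add_le _ _).trans (hd i).2, ?_⟩
  simp only [PiLp.add_apply, abs_add_eq_of_abs_le (hd _).1, sum_add_distrib]
  linarith

theorem eq_zero_of_mem_extremePoints_cubeL1Polytope {x d : EuclideanSpace ℝ ι}
    (hx : x ∈ (cubeL1Polytope ι k).extremePoints ℝ)
    (hd : ∀ i, |d i| ≤ |x i| ∧ |x i| + |d i| ≤ 1)
    (hsum : |∑ i, Real.sign (x i) * d i| ≤ k - ∑ i, |x i|) : d = 0 := by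
  refine eq_zero_of_mem_extremePoints_of_add_mem_of_sub_mem hx
    (add_mem_cubeL1Polytope hd (le_of_abs_le hsum)) ?_
  rw [sub_eq_add_neg]
  refine add_mem_cubeL1Polytope (by simpa using hd) ?_
  simp only [PiLp.neg_apply, mul_neg, sum_neg_distrib]
  linarith [neg_le_of_abs_le hsum]

theorem exists_ne_abs_ne_one_of_sum_abs_eq [DecidableEq ι] {x : EuclideanSpace ℝ ι}
    (hsum : ∑ i, |x i| = k) {i : ι} (hi₀ : 0 < |x i|) (hi₁ : |x i| < 1) :
    ∃ j ≠ i, x j ≠ 0 ∧ |x j| ≠ 1 := by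
  by_contra! h
  have hrest : ∑ j ∈ univ.erase i, |x j| = #{j ∈ univ.erase i | x j ≠ 0} := by
    rw [← sum_boole]
    refine sum_congr rfl fun j hj => ?_
    by_cases hj0 : x j = 0
    · simp [hj0]
    · simp [hj0, h j (ne_of_mem_erase hj) hj0]
  rw [← add_sum_erase _ _ (mem_univ i), hrest] at hsum
  set N := #{j ∈ univ.erase i | x j ≠ 0}
  have h₁ : (N : ℝ) < k := by linarith
  have h₂ : (k : ℝ) < N + 1 := by linarith
  norm_cast at h₁ h₂
  omega

theorem sum_abs_eq_of_mem_extremePoints [DecidableEq ι] {x : EuclideanSpace ℝ ι}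
    (hx : x ∈ (cubeL1Polytope ι k).extremePoints ℝ) {i : ι} (hi₀ : 0 < |x i|) (hi₁ : |x i| < 1) :
    ∑ l, |x l| = k := by
  refine hx.1.2.eq_of_not_lt fun hlt => ?_
  -- there is room in the ℓ¹ constraint to move the coordinate `i` alone
  set ε := min (min |x i| (1 - |x i|)) (k - ∑ l, |x l|)
  have hε : 0 < ε := lt_min (lt_min hi₀ (by linarith)) (by linarith)
  have hεi : ε ≤ |x i| ∧ ε ≤ 1 - |x i| := ⟨by simp [ε], by simp [ε]⟩
  have hd := eq_zero_of_mem_extremePoints_cubeL1Polytope hx (d := EuclideanSpace.single i ε)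
    (fun l => by
      by_cases hl : l = i
      · subst hl
        simpa [abs_of_pos hε] using ⟨hεi.1, by linarith [hεi.2]⟩
      · simp [hl, hx.1.1 l])
    (by simp [abs_mul, Real.abs_sign_of_ne_zero (abs_pos.mp hi₀), abs_of_pos hε, ε])
  exact hε.ne' (by simpa using congrArg (· i) hd)

theorem eq_zero_or_abs_eq_one_of_mem_extremePoints [DecidableEq ι] {x : EuclideanSpace ℝ ι}
    (hx : x ∈ (cubeL1Polytope ι k).extremePoints ℝ) (i : ι) : x i = 0 ∨ |x i| = 1 := by
  by_contra! hi
  have hi₀ : 0 < |x i| := abs_pos.mpr hi.1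
  have hi₁ : |x i| < 1 := (hx.1.1 i).lt_of_ne hi.2
  have heq := sum_abs_eq_of_mem_extremePoints hx hi₀ hi₁
  -- a second fractional coordinate `j`: move `i` and `j` in opposite directions
  obtain ⟨j, hji, hj⟩ := exists_ne_abs_ne_one_of_sum_abs_eq heq hi₀ hi₁
  have hj₀ : 0 < |x j| := abs_pos.mpr hj.1
  have hj₁ : |x j| < 1 := (hx.1.1 j).lt_of_ne hj.2
  set ε := min (min |x i| (1 - |x i|)) (min |x j| (1 - |x j|))
  have hε : 0 < ε := lt_min (lt_min hi₀ (by linarith)) (lt_min hj₀ (by linarith))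
  have hεi : ε ≤ |x i| ∧ ε ≤ 1 - |x i| := ⟨by simp [ε], by simp [ε]⟩
  have hεj : ε ≤ |x j| ∧ ε ≤ 1 - |x j| := ⟨by simp [ε], by simp [ε]⟩
  have hd := eq_zero_of_mem_extremePoints_cubeL1Polytope hx
    (d := EuclideanSpace.single i (ε * Real.sign (x i)) -
      EuclideanSpace.single j (ε * Real.sign (x j)))
    (fun l => by
      by_cases hl : l = i
      · subst hl
        simpa [hji.symm, abs_mul, Real.abs_sign_of_ne_zero hi.1, abs_of_pos hε]
          using ⟨hεi.1, by linarith [hεi.2]⟩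
      · by_cases hlj : l = j
        · subst hlj
          simpa [hl, abs_mul, Real.abs_sign_of_ne_zero hj.1, abs_of_pos hε]
            using ⟨hεj.1, by linarith [hεj.2]⟩
        · simp [hl, hlj, hx.1.1 l])
    (by
      simp only [PiLp.sub_apply, PiLp.single_apply, mul_sub, mul_ite, mul_zero, sum_sub_distrib,
        sum_ite_eq', mem_univ, if_true]
      rw [mul_left_comm, Real.sign_mul_self_of_ne_zero hi.1, mul_left_comm,
        Real.sign_mul_self_of_ne_zero hj.1, heq]
      simp)
  have := congrArg (· i) hd
  simp [hji.symm, hε.ne', Real.sign_eq_zero_iff, hi.1] at this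

end Polytope

section AtomicNorm

variable {n k : ℕ}

def sparseAtoms (n k : ℕ) : Set (EuclideanSpace ℝ (Fin n)) :=
  {u | u ∈ sparseVecs n k ∧ ‖u‖ = 1}

theorem atomNormSigma_eq_gauge :
    atomNormSigma n k = gauge (convexHull ℝ (sparseAtoms n k)) := rfl

theorem single_mem_sparseAtoms (hk : 1 ≤ k) (i : Fin n) {c : ℝ} (hc : |c| = 1) :
    EuclideanSpace.single i c ∈ sparseAtoms n k :=
  ⟨⟨{i}, by simpa using hk, fun j hj => by simp_all⟩, by simpa using hc⟩

theorem sum_abs_smul_single_sign (v : EuclideanSpace ℝ (Fin n)) :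
    ∑ i, |v i| • EuclideanSpace.single i (if 0 ≤ v i then 1 else -1 : ℝ) = v := by
  ext j
  simp only [WithLp.ofLp_sum, Finset.sum_apply, PiLp.smul_apply, PiLp.single_apply, smul_eq_mul,
    mul_ite, mul_zero, sum_ite_eq, mem_univ, if_true]
  split_ifs with h
  · rw [abs_of_nonneg h, mul_one]
  · rw [abs_of_neg (not_le.mp h), mul_neg_one, neg_neg]

theorem zero_mem_convexHull_sparseAtoms [NeZero n] (hk : 1 ≤ k) :
    (0 : EuclideanSpace ℝ (Fin n)) ∈ convexHull ℝ (sparseAtoms n k) := by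
  have h₁ := subset_convexHull ℝ _ (single_mem_sparseAtoms (n := n) hk 0 (c := 1) (by simp))
  have h₂ := subset_convexHull ℝ _ (single_mem_sparseAtoms (n := n) hk 0 (c := -1) (by simp))
  convert convex_convexHull ℝ _ h₁ h₂ (by norm_num : (0 : ℝ) ≤ 1 / 2)
    (by norm_num : (0 : ℝ) ≤ 1 / 2) (by norm_num) using 1
  ext i
  simp only [PiLp.zero_apply, PiLp.add_apply, PiLp.smul_apply, PiLp.single_apply, smul_eq_mul]
  split_ifs <;> norm_num

theorem mem_convexHull_sparseAtoms_of_sum_abs_le_one [NeZero n] (hk : 1 ≤ k)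
    {v : EuclideanSpace ℝ (Fin n)} (hv : ∑ i, |v i| ≤ 1) : v ∈ convexHull ℝ (sparseAtoms n k) := by
  have hconv := convex_convexHull ℝ (sparseAtoms n k)
  have hatom : ∀ i, EuclideanSpace.single i (if 0 ≤ v i then 1 else -1 : ℝ) ∈
      convexHull ℝ (sparseAtoms n k) :=
    fun i => subset_convexHull ℝ _ (single_mem_sparseAtoms hk i (by split_ifs <;> simp))
  have h₀ := zero_mem_convexHull_sparseAtoms (n := n) hk
  set s := ∑ i, |v i|
  rcases (sum_nonneg fun i _ => abs_nonneg (v i) : 0 ≤ s).eq_or_lt with hs | hs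
  · have : v = 0 := by
      ext i
      simpa using (sum_eq_zero_iff_of_nonneg fun i _ => abs_nonneg (v i)).mp hs.symm i
    exact this ▸ h₀
  · have hmem : ∑ i, (|v i| / s) • EuclideanSpace.single i (if 0 ≤ v i then 1 else -1 : ℝ) ∈
        convexHull ℝ (sparseAtoms n k) :=
      hconv.sum_mem (fun i _ => by positivity) (by rw [← sum_div, div_self hs.ne'])
        fun i _ => hatom i
    have hv_eq : v = s • ∑ i, (|v i| / s) •
        EuclideanSpace.single i (if 0 ≤ v i then 1 else -1 : ℝ) := by
      rw [smul_sum]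
      conv_lhs => rw [← sum_abs_smul_single_sign v]
      exact sum_congr rfl fun i _ => by rw [smul_smul, mul_div_cancel₀ _ hs.ne']
    rw [hv_eq]
    exact hconv.smul_mem_of_zero_mem h₀ hmem ⟨hs.le, hv⟩

theorem convexHull_sparseAtoms_mem_nhds [NeZero n] (hk : 1 ≤ k) :
    convexHull ℝ (sparseAtoms n k) ∈ 𝓝 (0 : EuclideanSpace ℝ (Fin n)) := by
  have hn : (0 : ℝ) < n := by exact_mod_cast Nat.pos_of_ne_zero (NeZero.ne n)
  refine Metric.mem_nhds_iff.mpr ⟨1 / n, by positivity, fun v hv => ?_⟩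
  rw [mem_ball_zero_iff, lt_div_iff₀ hn] at hv
  refine mem_convexHull_sparseAtoms_of_sum_abs_le_one hk ?_
  calc ∑ i, |v i| ≤ ∑ _i : Fin n, ‖v‖ := sum_le_sum fun i _ => PiLp.norm_apply_le v i
    _ ≤ 1 := by rw [sum_const, card_univ, Fintype.card_fin, nsmul_eq_mul]; linarith

theorem atomNormSigma_le_norm {v : EuclideanSpace ℝ (Fin n)} (hv : v ∈ sparseVecs n k) :
    atomNormSigma n k v ≤ ‖v‖ := by
  rcases eq_or_ne v 0 with rfl | hv₀
  · simp [atomNormSigma_eq_gauge]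
  refine gauge_le_of_mem (norm_nonneg v) ⟨‖v‖⁻¹ • v, subset_convexHull ℝ _ ⟨?_, ?_⟩, ?_⟩
  · obtain ⟨s, hs, hv0⟩ := hv
    exact ⟨s, hs, fun i hi => by simp [hv0 i hi]⟩
  · rw [norm_smul, norm_inv, norm_norm, inv_mul_cancel₀ (norm_ne_zero_iff.mpr hv₀)]
  · show ‖v‖ • ‖v‖⁻¹ • v = v
    rw [smul_smul, mul_inv_cancel₀ (norm_ne_zero_iff.mpr hv₀), one_smul]

theorem inner_le_atomNormSigma [NeZero n] (hk : 1 ≤ k) {u : EuclideanSpace ℝ (Fin n)}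
    (hu : ∀ a ∈ sparseAtoms n k, ⟪u, a⟫ ≤ 1) (v : EuclideanSpace ℝ (Fin n)) :
    ⟪u, v⟫ ≤ atomNormSigma n k v :=
  le_gauge_of_forall_le_one (absorbent_nhds_zero (convexHull_sparseAtoms_mem_nhds hk))
    (innerₛₗ ℝ u)
    (fun _ ha => convexHull_min hu (convex_halfSpace_le (innerₛₗ ℝ u).isLinear 1) ha) v

theorem mem_sparseVecs_of_abs_eq_one {x : EuclideanSpace ℝ (Fin n)}
    (hx : ∀ i, x i = 0 ∨ |x i| = 1) (hsum : ∑ i, |x i| ≤ k) : x ∈ sparseVecs n k := by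
  refine ⟨({i | x i ≠ 0} : Finset (Fin n)), ?_, fun i hi => by simpa using hi⟩
  have hcard : (#{i | x i ≠ 0} : ℝ) = ∑ i, |x i| := by
    rw [card_filter, Nat.cast_sum]
    refine sum_congr rfl fun i _ => ?_
    rcases hx i with h | h
    · simp [h]
    · simp [h, abs_pos.mp (h ▸ one_pos : 0 < |x i|)]
  exact_mod_cast hcard.trans_le hsum

theorem atomNormSigma_le_sqrt_of_mem_cubeL1Polytope [NeZero n] (hk : 1 ≤ k)
    {v : EuclideanSpace ℝ (Fin n)} (hv : v ∈ cubeL1Polytope (Fin n) k) :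
    atomNormSigma n k v ≤ √k := by
  have hC := convexHull_sparseAtoms_mem_nhds (n := n) hk
  have hconv : Convex ℝ {v | atomNormSigma n k v ≤ √k} :=
    (convex_convexHull ℝ _).setOfPred_gauge_le (mem_of_mem_nhds hC) (absorbent_nhds_zero hC) _
  have hclosed : IsClosed {v | atomNormSigma n k v ≤ √k} :=
    isClosed_le (continuous_gauge (convex_convexHull ℝ _) hC) continuous_const
  have hext : (cubeL1Polytope (Fin n) k).extremePoints ℝ ⊆ {v | atomNormSigma n k v ≤ √k} :=
    fun x hx => (atomNormSigma_le_norm (mem_sparseVecs_of_abs_eq_one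
      (eq_zero_or_abs_eq_one_of_mem_extremePoints hx) hx.1.2)).trans
      (Real.le_sqrt_of_sq_le ((norm_sq_le_sum_abs hx.1.1).trans hx.1.2))
  rw [← closure_convexHull_extremePoints isCompact_cubeL1Polytope convex_cubeL1Polytope] at hv
  exact closure_minimal (convexHull_min hext hconv) hclosed hv

theorem atomNormSigma_le_sqrt_mul [NeZero n] (hk : 1 ≤ k) {v : EuclideanSpace ℝ (Fin n)} {α : ℝ}
    (hα : 0 ≤ α) (hv : ∀ i, |v i| ≤ α) (hsum : ∑ i, |v i| ≤ k * α) :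
    atomNormSigma n k v ≤ √k * α := by
  rcases hα.eq_or_lt with rfl | hα
  · have : v = 0 := by ext i; simpa using hv i
    simp [this, atomNormSigma_eq_gauge]
  have hP : α⁻¹ • v ∈ cubeL1Polytope (Fin n) k := by
    refine ⟨fun i => ?_, ?_⟩
    · simpa [abs_mul, abs_of_pos hα, inv_mul_le_one₀ hα] using hv i
    · simpa [abs_mul, abs_of_pos hα, ← mul_sum, inv_mul_le_iff₀ hα, mul_comm] using hsum
  have h := atomNormSigma_le_sqrt_of_mem_cubeL1Polytope hk hP
  rwa [atomNormSigma_eq_gauge, gauge_smul_of_nonneg (inv_nonneg.mpr hα.le), smul_eq_mul,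
    inv_mul_le_iff₀ hα, mul_comm, ← atomNormSigma_eq_gauge] at h

end AtomicNorm

section Restriction

variable {n k : ℕ}

@[simp]
theorem coordRestrict_apply (z : EuclideanSpace ℝ (Fin n)) (S : Finset (Fin n)) (i : Fin n) :
    coordRestrict z S i = if i ∈ S then z i else 0 := rfl

theorem card_mul_div_sqrt_le_atomNormSigma [NeZero n] (hk : 1 ≤ k) (V : Finset (Fin n)) (β : ℝ) :
    #V * β / √k ≤ atomNormSigma n k (WithLp.toLp 2 fun i => if i ∈ V then β else 0) := by
  have hk₀ : (0 : ℝ) < √k := Real.sqrt_pos.mpr (by exact_mod_cast hk)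
  have hinner : ∀ x : EuclideanSpace ℝ (Fin n),
      ⟪WithLp.toLp 2 fun i => if i ∈ V then (√k)⁻¹ else 0, x⟫ = (√k)⁻¹ * ∑ i ∈ V, x i := by
    intro x
    simp [PiLp.inner_apply, sum_ite_mem, sum_mul, mul_comm]
  convert inner_le_atomNormSigma hk
    (u := WithLp.toLp 2 fun i => if i ∈ V then (√k)⁻¹ else 0) (fun a ha => ?_) _ using 1
  · simp [hinner, sum_ite_mem, div_eq_inv_mul, mul_comm]
  obtain ⟨⟨s, hs, ha₀⟩, ha₁⟩ := ha
  have hnorm : ∑ i, a i ^ 2 = 1 := by rw [← EuclideanSpace.real_norm_sq_eq, ha₁, one_pow]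
  rw [hinner, inv_mul_le_iff₀ hk₀, mul_one]
  calc ∑ i ∈ V, a i ≤ ∑ i, |a i| :=
        (sum_le_sum fun i _ => le_abs_self _).trans
          (sum_le_sum_of_subset_of_nonneg (subset_univ V) fun i _ _ => abs_nonneg _)
    _ = ∑ i ∈ s, |a i| :=
        (sum_subset (subset_univ s) fun i _ hi => by simp [ha₀ i hi]).symm
    _ ≤ √(#s : ℝ) * √(∑ i ∈ s, a i ^ 2) := sum_abs_le_sqrt_card_mul_sqrt_sum_sq s a
    _ ≤ √k * √(∑ i, a i ^ 2) := by
        gcongr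
        exact subset_univ s
    _ = √k := by rw [hnorm, Real.sqrt_one, mul_one]

theorem norm_coordRestrict_sq (z : EuclideanSpace ℝ (Fin n)) (S : Finset (Fin n)) :
    ‖coordRestrict z S‖ ^ 2 = ∑ i ∈ S, z i ^ 2 := by
  simp [EuclideanSpace.real_norm_sq_eq, ite_pow, sum_ite_mem]

theorem sum_abs_coordRestrict (z : EuclideanSpace ℝ (Fin n)) (S : Finset (Fin n)) :
    ∑ i, |coordRestrict z S i| = ∑ i ∈ S, |z i| := by
  simp [apply_ite, sum_ite_mem]

theorem sum_abs_le_sqrt_card_mul_norm_coordRestrict (z : EuclideanSpace ℝ (Fin n))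
    (S : Finset (Fin n)) : ∑ i ∈ S, |z i| ≤ √(#S : ℝ) * ‖coordRestrict z S‖ := by
  rw [← Real.sqrt_sq (norm_nonneg (coordRestrict z S)), norm_coordRestrict_sq]
  exact sum_abs_le_sqrt_card_mul_sqrt_sum_sq S _

theorem sqrt_card_mul_abs_le_norm_coordRestrict {z : EuclideanSpace ℝ (Fin n)} {S : Finset (Fin n)}
    (hdom : ∀ i ∈ S, ∀ j ∉ S, |z j| ≤ |z i|) {j : Fin n} (hj : j ∉ S) :
    √(#S : ℝ) * |z j| ≤ ‖coordRestrict z S‖ := by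
  rw [← Real.sqrt_sq (norm_nonneg (coordRestrict z S)), norm_coordRestrict_sq,
    ← Real.sqrt_sq (abs_nonneg (z j)), ← Real.sqrt_mul (Nat.cast_nonneg _)]
  gcongr
  rw [← nsmul_eq_mul]
  exact card_nsmul_le_sum _ _ _ fun i hi => by
    simpa [sq_abs] using pow_le_pow_left₀ (abs_nonneg _) (hdom i hi j hj) 2

theorem atomNormSigma_coordRestrict_compl_le [NeZero n] (hk : 1 ≤ k)
    {z : EuclideanSpace ℝ (Fin n)} {S : Finset (Fin n)} (hS : #S = k)
    (hdom : ∀ i ∈ S, ∀ j ∉ S, |z j| ≤ |z i|) {c : ℝ} (hc : 1 ≤ c)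
    (hsum : ∑ i ∈ Sᶜ, |z i| ≤ c * ∑ i ∈ S, |z i|) :
    atomNormSigma n k (coordRestrict z Sᶜ) ≤ c * ‖coordRestrict z S‖ := by
  have hk₀ : (0 : ℝ) < √k := Real.sqrt_pos.mpr (by exact_mod_cast hk)
  set N := ‖coordRestrict z S‖
  have key := atomNormSigma_le_sqrt_mul (v := coordRestrict z Sᶜ) (α := c * N / √k) hk
    (by positivity) (fun i => ?_) ?_
  · rwa [mul_div_cancel₀ _ hk₀.ne'] at key
  · by_cases hi : i ∈ S
    · simpa [hi] using (by positivity : 0 ≤ c * N / √k)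
    · have := sqrt_card_mul_abs_le_norm_coordRestrict hdom hi
      rw [hS] at this
      simp only [coordRestrict_apply, mem_compl, hi, not_false_eq_true, if_true]
      rw [le_div_iff₀ hk₀]
      nlinarith [norm_nonneg (coordRestrict z S)]
  · have := sum_abs_le_sqrt_card_mul_norm_coordRestrict z S
    rw [hS] at this
    rw [sum_abs_coordRestrict]
    calc ∑ i ∈ Sᶜ, |z i| ≤ c * (√k * N) := hsum.trans (by gcongr)
      _ = k * (c * N / √k) := by
        field_simp
        rw [Real.sq_sqrt (Nat.cast_nonneg k), mul_comm]

end Restriction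

section Descent

variable {n k : ℕ}

theorem wNorm_coordRestrict (w : Fin n → ℝ) (z : EuclideanSpace ℝ (Fin n)) (S : Finset (Fin n)) :
    wNorm w (coordRestrict z S) = ∑ i ∈ S, w i * |z i| := by
  simp [wNorm, apply_ite, sum_ite_mem]

theorem exists_sum_compl_le_of_mem_descentConeSet {w : Fin n → ℝ} (hw : ∀ i, 0 ≤ w i)
    {z : EuclideanSpace ℝ (Fin n)} (hz : z ∈ descentConeSet (wNorm w) (sparseVecs n k)) :
    ∃ S : Finset (Fin n), #S ≤ k ∧ ∑ i ∈ Sᶜ, w i * |z i| ≤ ∑ i ∈ S, w i * |z i| := by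
  obtain ⟨x, ⟨S, hS, hx⟩, hxz⟩ := Set.mem_iUnion₂.mp hz
  refine ⟨S, hS, ?_⟩
  have hxz : wNorm w (x + z) ≤ wNorm w x := hxz
  rw [wNorm, wNorm, ← sum_add_sum_compl S, ← sum_add_sum_compl S (fun i => w i * |x i|)] at hxz
  have h₁ : ∑ i ∈ Sᶜ, w i * |(x + z) i| = ∑ i ∈ Sᶜ, w i * |z i| :=
    sum_congr rfl fun i hi => by simp [hx i (mem_compl.mp hi)]
  have h₂ : ∑ i ∈ Sᶜ, w i * |x i| = 0 :=
    sum_eq_zero fun i hi => by simp [hx i (mem_compl.mp hi)]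
  have h₃ : ∑ i ∈ S, w i * |x i| ≤ ∑ i ∈ S, w i * |(x + z) i| + ∑ i ∈ S, w i * |z i| := by
    rw [← sum_add_distrib]
    gcongr with i
    rw [← mul_add]
    gcongr
    · exact hw i
    · simpa using abs_add_le (x i + z i) (-z i)
  linarith

theorem mem_descentConeSet_wNorm_of_sum_compl_le {w : Fin n → ℝ} {z : EuclideanSpace ℝ (Fin n)}
    {S : Finset (Fin n)} (hS : #S ≤ k) (h : ∑ i ∈ Sᶜ, w i * |z i| ≤ ∑ i ∈ S, w i * |z i|) :
    z ∈ descentConeSet (wNorm w) (sparseVecs n k) := by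
  refine Set.mem_iUnion₂.mpr ⟨-coordRestrict z S, ⟨S, hS, fun i hi => by simp [hi]⟩, ?_⟩
  have hsum : -coordRestrict z S + z = coordRestrict z Sᶜ := by
    ext i
    by_cases hi : i ∈ S <;> simp [hi]
  show wNorm w (-coordRestrict z S + z) ≤ wNorm w (-coordRestrict z S)
  rwa [hsum, show wNorm w (-coordRestrict z S) = wNorm w (coordRestrict z S) by simp [wNorm],
    wNorm_coordRestrict, wNorm_coordRestrict]

theorem mul_sum_compl_le_of_mem_descentConeSet {w : Fin n → ℝ} {m : ℝ} (hm : 0 ≤ m)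
    (hmw : ∀ i, m ≤ w i) (hw : ∀ i, w i ≤ 1) {z : EuclideanSpace ℝ (Fin n)} {T : Finset (Fin n)}
    (hT : #T = k) (hdom : ∀ i ∈ T, ∀ j ∉ T, |z j| ≤ |z i|)
    (hz : z ∈ descentConeSet (wNorm w) (sparseVecs n k)) :
    m * ∑ i ∈ Tᶜ, |z i| ≤ ∑ i ∈ T, |z i| := by
  obtain ⟨S, hS, hSz⟩ := exists_sum_compl_le_of_mem_descentConeSet (fun i => hm.trans (hmw i)) hz
  have hST : ∑ i ∈ S, |z i| ≤ ∑ i ∈ T, |z i| :=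
    sum_le_sum_of_card_le_of_forall_le (fun i => abs_nonneg (z i)) (hT ▸ hS) hdom
  have hcompl : ∑ i ∈ Tᶜ, |z i| ≤ ∑ i ∈ Sᶜ, |z i| := by
    have := sum_add_sum_compl S fun i => |z i|
    have := sum_add_sum_compl T fun i => |z i|
    linarith
  calc m * ∑ i ∈ Tᶜ, |z i| ≤ m * ∑ i ∈ Sᶜ, |z i| := by gcongr
    _ ≤ ∑ i ∈ Sᶜ, w i * |z i| := by rw [mul_sum]; gcongr with i; exact hmw i
    _ ≤ ∑ i ∈ S, w i * |z i| := hSz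
    _ ≤ ∑ i ∈ S, |z i| := by gcongr with i; exact mul_le_of_le_one_left (abs_nonneg _) (hw i)
    _ ≤ ∑ i ∈ T, |z i| := hST

end Descent

section Dsigma

variable {n k : ℕ}

def sigmaRatio (n k : ℕ) (T : EuclideanSpace ℝ (Fin n) → Finset (Fin n))
    (z : EuclideanSpace ℝ (Fin n)) : ℝ :=
  atomNormSigma n k (coordRestrict z (T z)ᶜ) ^ 2 / ‖coordRestrict z (T z)‖ ^ 2

theorem Dsigma_eq_sSup_image (T : EuclideanSpace ℝ (Fin n) → Finset (Fin n))
    (R : EuclideanSpace ℝ (Fin n) → ℝ) :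
    Dsigma n k T R = sSup (sigmaRatio n k T '' (descentConeSet R (sparseVecs n k) \ {0})) := by
  simp only [Dsigma, sigmaRatio, Set.image, eq_comm]

variable [NeZero n] {T : EuclideanSpace ℝ (Fin n) → Finset (Fin n)}

theorem sigmaRatio_le_of_mem_descentConeSet (hk : 1 ≤ k)
    (hT : ∀ z, #(T z) = k ∧ ∀ i ∈ T z, ∀ j ∉ T z, |z j| ≤ |z i|) {w : Fin n → ℝ} {m : ℝ}
    (hm : 0 < m) (hmw : ∀ i, m ≤ w i) (hw : ∀ i, w i ≤ 1) {z : EuclideanSpace ℝ (Fin n)}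
    (hz : z ∈ descentConeSet (wNorm w) (sparseVecs n k)) : sigmaRatio n k T z ≤ m⁻¹ ^ 2 := by
  have hsum := mul_sum_compl_le_of_mem_descentConeSet hm.le hmw hw (hT z).1 (hT z).2 hz
  have hm₁ : 1 ≤ m⁻¹ := one_le_inv₀ hm |>.mpr ((hmw 0).trans (hw 0))
  have h := atomNormSigma_coordRestrict_compl_le hk (hT z).1 (hT z).2 hm₁
    ((le_inv_mul_iff₀ hm).mpr hsum)
  refine div_le_of_le_mul₀ (by positivity) (by positivity) ?_
  rw [← mul_pow]
  exact pow_le_pow_left₀ (gauge_nonneg _) h 2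

theorem Dsigma_wNorm_le (hk : 1 ≤ k)
    (hT : ∀ z, #(T z) = k ∧ ∀ i ∈ T z, ∀ j ∉ T z, |z j| ≤ |z i|) {w : Fin n → ℝ} {m : ℝ}
    (hm : 0 < m) (hmw : ∀ i, m ≤ w i) (hw : ∀ i, w i ≤ 1) :
    Dsigma n k T (wNorm w) ≤ m⁻¹ ^ 2 := by
  rw [Dsigma_eq_sSup_image]
  exact Real.sSup_le (Set.forall_mem_image.2 fun z hz =>
    sigmaRatio_le_of_mem_descentConeSet hk hT hm hmw hw hz.1) (by positivity)

theorem sigmaRatio_le_Dsigma_wNorm (hk : 1 ≤ k)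
    (hT : ∀ z, #(T z) = k ∧ ∀ i ∈ T z, ∀ j ∉ T z, |z j| ≤ |z i|) {w : Fin n → ℝ} {m : ℝ}
    (hm : 0 < m) (hmw : ∀ i, m ≤ w i) (hw : ∀ i, w i ≤ 1) {z : EuclideanSpace ℝ (Fin n)}
    (hz : z ∈ descentConeSet (wNorm w) (sparseVecs n k)) (hz₀ : z ≠ 0) :
    sigmaRatio n k T z ≤ Dsigma n k T (wNorm w) := by
  rw [Dsigma_eq_sSup_image]
  exact le_csSup ⟨_, Set.forall_mem_image.2 fun z hz =>
    sigmaRatio_le_of_mem_descentConeSet hk hT hm hmw hw hz.1⟩ ⟨z, ⟨hz, hz₀⟩, rfl⟩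

end Dsigma

section StepVector

variable {n k : ℕ}

def stepVec (A B : Finset (Fin n)) (β : ℝ) : EuclideanSpace ℝ (Fin n) :=
  WithLp.toLp 2 fun i => if i ∈ A then 1 else if i ∈ B then β else 0

variable {A B : Finset (Fin n)} {β : ℝ}

theorem coordRestrict_stepVec_compl (hAB : Disjoint A B) :
    coordRestrict (stepVec A B β) Aᶜ = WithLp.toLp 2 fun i => if i ∈ B then β else 0 := by
  ext i
  by_cases hi : i ∈ A <;> simp [stepVec, hi, disjoint_left.mp hAB]

theorem norm_coordRestrict_stepVec_sq : ‖coordRestrict (stepVec A B β) A‖ ^ 2 = #A := by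
  rw [norm_coordRestrict_sq,
    sum_congr rfl fun i hi => (by simp [stepVec, hi] : stepVec A B β i ^ 2 = 1)]
  simp

theorem stepVec_mem_descentConeSet {w : Fin n → ℝ} (hAB : Disjoint A B) (hA : #A ≤ k)
    (hβ : 0 ≤ β) (hsum : β * ∑ i ∈ B, w i ≤ ∑ i ∈ A, w i) :
    stepVec A B β ∈ descentConeSet (wNorm w) (sparseVecs n k) := by
  refine mem_descentConeSet_wNorm_of_sum_compl_le hA ?_
  have hB : B ⊆ Aᶜ := fun i hi => mem_compl.mpr (disjoint_right.mp hAB hi)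
  have hAc : ∑ i ∈ Aᶜ, w i * |stepVec A B β i| = β * ∑ i ∈ B, w i := by
    rw [← sum_subset hB fun i hi hiB => by simp [stepVec, mem_compl.mp hi, hiB], mul_sum]
    exact sum_congr rfl fun i hi => by
      simp [stepVec, disjoint_right.mp hAB hi, hi, abs_of_nonneg hβ, mul_comm]
  have hA' : ∑ i ∈ A, w i * |stepVec A B β i| = ∑ i ∈ A, w i :=
    sum_congr rfl fun i hi => by simp [stepVec, hi]
  rwa [hAc, hA']

end StepVector

theorem mul_add_sum_lt_of_forall_le {ι : Type*} [DecidableEq ι] {k : ℕ} (hk : 1 ≤ k)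
    {w : ι → ℝ} (hw : ∀ i, w i ≤ 1) {A V : Finset ι} (hA : #A = k) (hV : #V = k)
    (hdom : ∀ a ∈ A, ∀ v ∈ V, w v ≤ w a) {a₁ : ι} (ha₁ : a₁ ∈ A) (hwa₁ : w a₁ = 1) {x : ℝ}
    (hx : x < 1) : k * (x + ∑ i ∈ V, w i) < (k + 1) * ∑ i ∈ A, w i := by
  obtain ⟨a₀, ha₀, hμ⟩ := A.exists_min_image w ⟨a₁, ha₁⟩
  have hsumA : 1 + (k - 1) * w a₀ ≤ ∑ i ∈ A, w i := by
    rw [← add_sum_erase A w ha₁, hwa₁]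
    have := card_nsmul_le_sum (A.erase a₁) w (w a₀) fun i hi => hμ i (mem_of_mem_erase hi)
    rw [card_erase_of_mem ha₁, hA, nsmul_eq_mul, Nat.cast_sub hk, Nat.cast_one] at this
    linarith
  have hsumV : ∑ i ∈ V, w i ≤ k * w a₀ := by
    have := sum_le_card_nsmul V w (w a₀) fun i hi => hdom a₀ ha₀ i hi
    rwa [hV, nsmul_eq_mul] at this
  have hk₀ : (1 : ℝ) ≤ k := by exact_mod_cast hk
  nlinarith [hw a₀, mul_le_mul_of_nonneg_left hsumV (by linarith : (0 : ℝ) ≤ k),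
    mul_le_mul_of_nonneg_left hsumA (by linarith : (0 : ℝ) ≤ k + 1)]

section Main

variable {n k : ℕ} [NeZero n] {T : EuclideanSpace ℝ (Fin n) → Finset (Fin n)}

theorem sq_le_Dsigma_wNorm_of_stepVec (hk : 1 ≤ k)
    (hT : ∀ z, #(T z) = k ∧ ∀ i ∈ T z, ∀ j ∉ T z, |z j| ≤ |z i|) {w : Fin n → ℝ} {m : ℝ}
    (hm : 0 < m) (hmw : ∀ i, m ≤ w i) (hw : ∀ i, w i ≤ 1) {A B : Finset (Fin n)}
    (hAB : Disjoint A B) (hA : #A = k) {β : ℝ} (hβ₀ : 0 ≤ β) (hβ₁ : β < 1)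
    (hsum : β * ∑ i ∈ B, w i ≤ ∑ i ∈ A, w i) :
    (#B * β / k) ^ 2 ≤ Dsigma n k T (wNorm w) := by
  set z := stepVec A B β
  have hTz : T z = A := by
    refine eq_of_card_eq_of_forall_le_of_forall_lt ((hT z).1.trans hA.symm) (hT z).2
      fun i hi j hj => ?_
    by_cases hjB : j ∈ B <;> simp [z, stepVec, hi, hj, hjB, abs_of_nonneg hβ₀, hβ₁]
  have hz₀ : z ≠ 0 := by
    obtain ⟨i, hi⟩ := card_pos.mp (hA ▸ hk : 0 < #A)
    intro h
    simpa [z, stepVec, hi] using congrArg (· i) h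
  have hk₀ : (0 : ℝ) < k := by exact_mod_cast hk
  have hratio : (#B * β / k) ^ 2 ≤ sigmaRatio n k T z := by
    rw [sigmaRatio, hTz, coordRestrict_stepVec_compl hAB, norm_coordRestrict_stepVec_sq, hA]
    calc (#B * β / k) ^ 2 = (#B * β / √k) ^ 2 / k := by
          rw [div_pow, div_pow, Real.sq_sqrt hk₀.le]; field_simp
      _ ≤ _ := by gcongr; exact card_mul_div_sqrt_le_atomNormSigma hk B β
  exact hratio.trans (sigmaRatio_le_Dsigma_wNorm hk hT hm hmw hw
    (stepVec_mem_descentConeSet hAB hA.le hβ₀ hsum) hz₀)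

theorem exists_disjoint_mul_sum_lt (hk : 1 ≤ k) (hn : 2 * k + 1 ≤ n) {w : Fin n → ℝ}
    (hw : ∀ i, w i ≤ 1) (hwmax : ∃ i, w i = 1) (hwne : w ≠ fun _ => 1) :
    ∃ A B : Finset (Fin n), Disjoint A B ∧ #A = k ∧ #B = k + 1 ∧
      k * ∑ i ∈ B, w i < (k + 1) * ∑ i ∈ A, w i := by
  obtain ⟨j₀, -, hj₀⟩ := univ.exists_min_image w univ_nonempty
  have hwj₀ : w j₀ < 1 := by
    obtain ⟨j, hj⟩ := Function.ne_iff.mp hwne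
    exact (hj₀ j (mem_univ j)).trans_lt ((hw j).lt_of_ne hj)
  have hs : #(univ.erase j₀) = n - 1 := by simp [card_erase_of_mem]
  obtain ⟨A, hAs, hA, hAdom⟩ :=
    exists_subset_card_eq_forall_le w (univ.erase j₀) (m := k) (by omega)
  obtain ⟨V, hV, hVcard⟩ := exists_subset_card_eq (s := univ.erase j₀ \ A) (n := k)
    (by rw [card_sdiff_of_subset hAs]; omega)
  have hj₀V : j₀ ∉ V := fun h => by simpa using (mem_sdiff.mp (hV h)).1
  obtain ⟨a₁, ha₁, hwa₁⟩ : ∃ a ∈ A, w a = 1 := by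
    obtain ⟨i₁, hi₁⟩ := hwmax
    by_cases h : i₁ ∈ A
    · exact ⟨i₁, h, hi₁⟩
    obtain ⟨a, ha⟩ := card_pos.mp (by omega : 0 < #A)
    have hi₁j₀ : i₁ ≠ j₀ := fun h => by rw [h] at hi₁; linarith
    exact ⟨a, ha, le_antisymm (hw a)
      (hi₁ ▸ hAdom a ha i₁ (mem_sdiff.mpr ⟨mem_erase.mpr ⟨hi₁j₀, mem_univ _⟩, h⟩))⟩
  refine ⟨A, insert j₀ V, ?_, hA, by rw [card_insert_of_notMem hj₀V, hVcard], ?_⟩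
  · rw [disjoint_insert_right]
    exact ⟨fun h => by simpa using hAs h,
      disjoint_left.mpr fun i hi hiV => (mem_sdiff.mp (hV hiV)).2 hi⟩
  · rw [sum_insert hj₀V]
    exact mul_add_sum_lt_of_forall_le hk hw hA hVcard (fun a ha v hv => hAdom a ha v (hV hv))
      ha₁ hwa₁ hwj₀

theorem Dsigma_wNorm_one_eq_one (hk : 1 ≤ k) (hn : 2 * k + 1 ≤ n)
    (hT : ∀ z, #(T z) = k ∧ ∀ i ∈ T z, ∀ j ∉ T z, |z j| ≤ |z i|) :
    Dsigma n k T (wNorm fun _ => 1) = 1 := by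
  have hle := Dsigma_wNorm_le hk hT one_pos (fun _ => le_rfl) (fun _ => le_rfl)
  obtain ⟨U, -, hU⟩ := exists_subset_card_eq (s := (univ : Finset (Fin n))) (n := 2 * k + 1)
    (by simpa using hn)
  obtain ⟨A, hAU, hA⟩ := exists_subset_card_eq (s := U) (n := k) (by omega)
  have hB : #(U \ A) = k + 1 := by rw [card_sdiff_of_subset hAU]; omega
  have hk₀ : (0 : ℝ) < k := by exact_mod_cast hk
  have hge := sq_le_Dsigma_wNorm_of_stepVec hk hT one_pos (fun _ => le_rfl) (fun _ => le_rfl)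
    (disjoint_sdiff : Disjoint A (U \ A)) hA (β := k / (k + 1)) (by positivity)
    (by rw [div_lt_one (by positivity)]; linarith) (le_of_eq (by
      simp only [sum_const, hA, hB, nsmul_eq_mul, mul_one, Nat.cast_add, Nat.cast_one]
      field_simp))
  rw [hB] at hge
  have h₁ : (((k + 1 : ℕ) : ℝ) * (k / (k + 1)) / k) ^ 2 = 1 := by push_cast; field_simp
  rw [inv_one, one_pow] at hle
  linarith

theorem one_lt_Dsigma_wNorm (hk : 1 ≤ k) (hn : 2 * k + 1 ≤ n)
    (hT : ∀ z, #(T z) = k ∧ ∀ i ∈ T z, ∀ j ∉ T z, |z j| ≤ |z i|) {w : Fin n → ℝ}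
    (hw₀ : ∀ i, 0 < w i) (hw : ∀ i, w i ≤ 1) (hwmax : ∃ i, w i = 1) (hwne : w ≠ fun _ => 1) :
    1 < Dsigma n k T (wNorm w) := by
  obtain ⟨j₀, -, hj₀⟩ := univ.exists_min_image w univ_nonempty
  obtain ⟨A, B, hAB, hA, hB, hlt⟩ := exists_disjoint_mul_sum_lt hk hn hw hwmax hwne
  have hB₀ : 0 < ∑ i ∈ B, w i := sum_pos (fun i _ => hw₀ i) (card_pos.mp (by omega))
  have hk₀ : (0 : ℝ) < k := by exact_mod_cast hk
  obtain ⟨β, hβk, hβ⟩ := exists_between (lt_min (b := 1) (c := (∑ i ∈ A, w i) / ∑ i ∈ B, w i)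
    (show (k : ℝ) / (k + 1) < 1 by rw [div_lt_one (by positivity)]; linarith)
    (by rw [div_lt_div_iff₀ (by positivity) hB₀]; linarith))
  have hβ₁ := hβ.trans_le (min_le_left _ _)
  have hβA := (lt_div_iff₀ hB₀).mp (hβ.trans_le (min_le_right _ _))
  have hD := sq_le_Dsigma_wNorm_of_stepVec hk hT (hw₀ j₀) (fun i => hj₀ i (mem_univ i)) hw hAB hA
    ((div_nonneg hk₀.le (by positivity)).trans hβk.le) hβ₁ hβA.le
  rw [div_lt_iff₀ (by positivity)] at hβk
  rw [hB] at hD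
  have h₁ : 1 < ((k + 1 : ℕ) : ℝ) * β / k := by
    rw [one_lt_div hk₀]; push_cast; linarith
  nlinarith

end Main

/-- Theorem 3 of the paper, the ℓ¹-norm is the unique maximizer of
`A_Σ^{RIP,suff}(R) = (D_Σ(R)+1)^{-1/2}` over weighted ℓ¹-norms. -/
theorem l1_unique_max_Asuff
    (n k : ℕ) (hk : 1 ≤ k) (hn : 2 * k + 1 ≤ n)
    (T : EuclideanSpace ℝ (Fin n) → Finset (Fin n))
    (hT : ∀ z, (T z).card = k ∧ ∀ i ∈ T z, ∀ j ∉ T z, |z j| ≤ |z i|) :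
    Dsigma n k T (wNorm (fun _ => 1)) = 1
    ∧ ∀ w : Fin n → ℝ, (∀ i, 0 < w i) → (∀ i, w i ≤ 1) → (∃ i, w i = 1) →
        w ≠ (fun _ => 1) →
        1 < Dsigma n k T (wNorm w) ∧
        1 / Real.sqrt (Dsigma n k T (wNorm w) + 1)
          < 1 / Real.sqrt (Dsigma n k T (wNorm (fun _ => 1)) + 1) := by
  have : NeZero n := ⟨by omega⟩
  have hD₁ := Dsigma_wNorm_one_eq_one hk hn hT
  refine ⟨hD₁, fun w hw₀ hw hwmax hwne => ?_⟩
  have hlt := one_lt_Dsigma_wNorm hk hn hT hw₀ hw hwmax hwne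
  refine ⟨hlt, ?_⟩
  rw [hD₁]
  gcongr
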